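/- Let S be a symplectic automorphism of V preserving two transverse Lagrangian subspaces E and F (i.e. S(E) = E, S(F) = F and E ⊕ F = V). Then for every Lagrangian subspace G of V with F ∩ G = 0 and E ∩ S(G) = 0, one has B(E, G, F, S(G)) = det(S|_E) / det(S|_F) = det(S|_E)², where S|_E and S|_F denote the restrictions of S to E and F. -/

import Mathlib

open Module

variable {V : Type*} [AddCommGroup V] [Module ℝ V]

/-- `L` is a Lagrangian subspace of the symplectic vector space `(V, ω)` of dimension `2n`:
it has dimension `n` and `ω` vanishes identically on it. -/
def IsLagrangian (ω : LinearMap.BilinForm ℝ V) (n : ℕ) (L : Submodule ℝ V) : Prop :=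
  Module.finrank ℝ L = n ∧ ∀ u ∈ L, ∀ v ∈ L, ω u v = 0

/-- The determinant of the `n × n` matrix `A_{l,m}` with entries `ω(l_i, m_j)`,
where `l` and `m` are bases of the submodules `L` and `M`. -/
noncomputable def detA {n : ℕ} (ω : LinearMap.BilinForm ℝ V) {L M : Submodule ℝ V}
    (l : Basis (Fin n) ℝ L) (m : Basis (Fin n) ℝ M) : ℝ :=
  (Matrix.of fun (i j : Fin n) => ω (l i : V) (m j : V)).det


/-- The cross ratio `B(L1,L2,L3,L4)` of four Lagrangian subspaces, computed with
respect to chosen bases `l1, l2, l3, l4` (its value is independent of these choices). -/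
noncomputable def crossRatioB {n : ℕ} (ω : LinearMap.BilinForm ℝ V)
    {L1 L2 L3 L4 : Submodule ℝ V}
    (l1 : Basis (Fin n) ℝ L1) (l2 : Basis (Fin n) ℝ L2)
    (l3 : Basis (Fin n) ℝ L3) (l4 : Basis (Fin n) ℝ L4) : ℝ :=
  detA ω l1 l2 * detA ω l3 l4 / (detA ω l1 l4 * detA ω l3 l2)

/-- If the pairing side `M` spans together with `L` everything, and `ω` vanishes on `M`,
the pairing matrix between `L` and `M` is nonsingular. -/
lemma detA_ne_zero_aux {n : ℕ}
    (ω : LinearMap.BilinForm ℝ V) (halt : LinearMap.IsAlt ω)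
    (hnd : LinearMap.BilinForm.Nondegenerate ω)
    {L M : Submodule ℝ V} (hsup : L ⊔ M = ⊤)
    (hM : ∀ u ∈ M, ∀ v ∈ M, ω u v = 0)
    (l : Basis (Fin n) ℝ L) (m : Basis (Fin n) ℝ M) :
    detA ω l m ≠ 0 := by
  intro hdet
  obtain ⟨a, ha, hmul⟩ := Matrix.exists_mulVec_eq_zero_iff.2 hdet
  set v : V := ∑ j, a j • (m j : V) with hv
  have hvM : v ∈ M := Submodule.sum_mem _ fun j _ => Submodule.smul_mem _ _ (m j).2
  have hl : ∀ i, ω (l i : V) v = 0 := by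
    intro i
    have h0 := congrFun hmul i
    simp only [Matrix.mulVec, dotProduct, Matrix.of_apply, Pi.zero_apply] at h0
    rw [hv]
    simp only [map_sum, map_smul, smul_eq_mul]
    rw [← h0]
    exact Finset.sum_congr rfl fun j _ => mul_comm _ _
  have hL : ∀ u ∈ L, ω u v = 0 := by
    intro u hu
    set φ : L →ₗ[ℝ] ℝ := (ω.flip v).comp L.subtype with hφdef
    have hφ : ∀ i, φ (l i) = 0 := fun i => hl i
    have h1 : φ ⟨u, hu⟩ = 0 := by
      rw [← l.sum_repr ⟨u, hu⟩, map_sum]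
      simp [hφ]
    simpa [hφdef, LinearMap.flip_apply] using h1
  have hall : ∀ u : V, ω u v = 0 := by
    intro u
    have hu : u ∈ L ⊔ M := hsup ▸ Submodule.mem_top
    obtain ⟨x, hx, y, hy, rfl⟩ := Submodule.mem_sup.1 hu
    simp [map_add, hL x hx, hM y hy v hvM]
  have hv0 : v = 0 := by
    apply hnd.1
    intro u
    rw [← LinearMap.IsAlt.neg halt u v, hall u, neg_zero]
  apply ha
  have hsum : (∑ j, a j • m j : M) = 0 := by
    apply Subtype.ext
    have : ((∑ j, a j • m j : M) : V) = ∑ j, a j • (m j : V) := by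
      simp
    rw [this, ← hv, hv0]
    rfl
  have hzero := Fintype.linearIndependent_iff.1 m.linearIndependent a hsum
  funext i
  exact hzero i

/-- If a symplectic automorphism `S` preserves two transverse Lagrangian subspaces `E` and `F`,
then for every Lagrangian `G` with `F ∩ G = 0` and `E ∩ S(G) = 0` one has
`B(E, G, F, S(G)) = det(S|_E) / det(S|_F) = det(S|_E)²`. -/
theorem crossRatio_period_formula
    [FiniteDimensional ℝ V]
    (ω : LinearMap.BilinForm ℝ V) (halt : LinearMap.IsAlt ω)
    (hnd : LinearMap.BilinForm.Nondegenerate ω)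
    (n : ℕ) (hV : Module.finrank ℝ V = 2 * n)
    (E F G : Submodule ℝ V)
    (hE : IsLagrangian ω n E) (hF : IsLagrangian ω n F) (hG : IsLagrangian ω n G)
    (hEF : IsCompl E F)
    (S : V →ₗ[ℝ] V) (hS : ∀ u v : V, ω (S u) (S v) = ω u v)
    (hmE : E.map S = E) (hmF : F.map S = F)
    (hSE : ∀ x ∈ E, S x ∈ E) (hSF : ∀ x ∈ F, S x ∈ F)
    (hFG : F ⊓ G = ⊥) (hESG : E ⊓ G.map S = ⊥)
    (e : Basis (Fin n) ℝ E) (g : Basis (Fin n) ℝ G) (f : Basis (Fin n) ℝ F)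
    (sg : Basis (Fin n) ℝ (G.map S : Submodule ℝ V)) :
    crossRatioB ω e g f sg
        = LinearMap.det (S.restrict hSE) / LinearMap.det (S.restrict hSF) ∧
      crossRatioB ω e g f sg = (LinearMap.det (S.restrict hSE)) ^ 2 := by
  classical
  -- S is injective
  have Sinj : Function.Injective S := by
    rw [← LinearMap.ker_eq_bot]
    apply (Submodule.eq_bot_iff _).2
    intro x hx
    apply hnd.1
    intro y
    rw [← hS x y, LinearMap.mem_ker.1 hx, map_zero, LinearMap.zero_apply]
  -- the image S(G) is Lagrangian data
  have hG'rank : finrank ℝ (G.map S : Submodule ℝ V) = n :=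
    ((Submodule.equivMapOfInjective S Sinj G).finrank_eq).symm.trans hG.1
  have hG'lag : ∀ u ∈ G.map S, ∀ v ∈ G.map S, ω u v = 0 := by
    rintro _ ⟨x, hx, rfl⟩ _ ⟨y, hy, rfl⟩
    rw [hS]
    exact hG.2 x hx y hy
  -- sup lemmas
  have hsupFG : F ⊔ G = ⊤ := by
    apply Submodule.eq_top_of_finrank_eq
    have h1 := Submodule.finrank_sup_add_finrank_inf_eq F G
    rw [hFG, finrank_bot, hF.1, hG.1] at h1
    rw [hV]
    omega
  have hsupESG : E ⊔ G.map S = ⊤ := by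
    apply Submodule.eq_top_of_finrank_eq
    have h1 := Submodule.finrank_sup_add_finrank_inf_eq E (G.map S)
    rw [hESG, finrank_bot, hE.1, hG'rank] at h1
    rw [hV]
    omega
  have hsupEF : E ⊔ F = ⊤ := hEF.sup_eq_top
  -- the three nonvanishing pairings
  have hAef : detA ω e f ≠ 0 := detA_ne_zero_aux ω halt hnd hsupEF hF.2 e f
  have hAfg : detA ω f g ≠ 0 := detA_ne_zero_aux ω halt hnd hsupFG hG.2 f g
  have hAesg : detA ω e sg ≠ 0 := detA_ne_zero_aux ω halt hnd hsupESG hG'lag e sg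
  -- matrices of S restricted to E and F
  set P : Matrix (Fin n) (Fin n) ℝ := LinearMap.toMatrix e e (S.restrict hSE) with hPdef
  set Q : Matrix (Fin n) (Fin n) ℝ := LinearMap.toMatrix f f (S.restrict hSF) with hQdef
  have hdetP : P.det = LinearMap.det (S.restrict hSE) := LinearMap.det_toMatrix e _
  have hdetQ : Q.det = LinearMap.det (S.restrict hSF) := LinearMap.det_toMatrix f _
  have hSe : ∀ i, S ((e i : V)) = ∑ k, P k i • ((e k : V)) := by
    intro i
    have h1 : (S.restrict hSE) (e i) = ∑ k, P k i • e k := by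
      simp only [hPdef, LinearMap.toMatrix_apply]
      exact (e.sum_repr _).symm
    have h2 := congrArg (Submodule.subtype E) h1
    simpa [map_sum, map_smul] using h2
  have hSf : ∀ i, S ((f i : V)) = ∑ k, Q k i • ((f k : V)) := by
    intro i
    have h1 : (S.restrict hSF) (f i) = ∑ k, Q k i • f k := by
      simp only [hQdef, LinearMap.toMatrix_apply]
      exact (f.sum_repr _).symm
    have h2 := congrArg (Submodule.subtype F) h1
    simpa [map_sum, map_smul] using h2
  -- key expansions
  have keyE : ∀ (v : Fin n → V),
      (Matrix.of fun i j => ω (e i : V) (v j)).det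
        = P.det * (Matrix.of fun i j => ω (e i : V) (S (v j))).det := by
    intro v
    have hmat : (Matrix.of fun i j => ω (e i : V) (v j))
        = P.transpose * Matrix.of fun i j => ω (e i : V) (S (v j)) := by
      ext i j
      simp only [Matrix.of_apply, Matrix.mul_apply, Matrix.transpose_apply]
      rw [← hS (e i : V) (v j), hSe i]
      simp only [map_sum, map_smul, LinearMap.sum_apply, LinearMap.smul_apply, smul_eq_mul]
    rw [hmat, Matrix.det_mul, Matrix.det_transpose]
  have keyF : ∀ (v : Fin n → V),
      (Matrix.of fun i j => ω (f i : V) (v j)).det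
        = Q.det * (Matrix.of fun i j => ω (f i : V) (S (v j))).det := by
    intro v
    have hmat : (Matrix.of fun i j => ω (f i : V) (v j))
        = Q.transpose * Matrix.of fun i j => ω (f i : V) (S (v j)) := by
      ext i j
      simp only [Matrix.of_apply, Matrix.mul_apply, Matrix.transpose_apply]
      rw [← hS (f i : V) (v j), hSf i]
      simp only [map_sum, map_smul, LinearMap.sum_apply, LinearMap.smul_apply, smul_eq_mul]
    rw [hmat, Matrix.det_mul, Matrix.det_transpose]
  -- abbreviations
  set a : ℝ := (Matrix.of fun i j => ω (e i : V) (S ((g j : V)))).det with hadef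
  set b : ℝ := (Matrix.of fun i j => ω (f i : V) (S ((g j : V)))).det with hbdef
  have hEg : detA ω e g = P.det * a := keyE (fun j => (g j : V))
  have hFg : detA ω f g = Q.det * b := keyF (fun j => (g j : V))
  -- change of basis on S(G)
  set sg' : Basis (Fin n) ℝ (G.map S : Submodule ℝ V) :=
    g.map (Submodule.equivMapOfInjective S Sinj G) with hsg'def
  have hsg' : ∀ k, ((sg' k : V)) = S ((g k : V)) := by
    intro k
    simp [hsg'def, Basis.map_apply, Submodule.coe_equivMapOfInjective_apply]
  set C : Matrix (Fin n) (Fin n) ℝ := sg'.toMatrix sg with hCdef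
  have hsgC : ∀ j, ((sg j : V)) = ∑ k, C k j • ((sg' k : V)) := by
    intro j
    rw [show sg j = ∑ k, C k j • sg' k from (Basis.sum_toMatrix_smul_self sg' sg j).symm]
    simp only [AddSubmonoidClass.coe_finset_sum, SetLike.val_smul]
  have hdetC : C.det ≠ 0 := by
    have h1 := congrArg Matrix.det (Basis.toMatrix_mul_toMatrix_flip sg' sg)
    rw [Matrix.det_mul, Matrix.det_one] at h1
    exact left_ne_zero_of_mul_eq_one h1
  have hEsg : detA ω e sg = a * C.det := by
    have hmat : (Matrix.of fun i j => ω (e i : V) ((sg j : V)))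
        = (Matrix.of fun i k => ω (e i : V) (S ((g k : V)))) * C := by
      ext i j
      simp only [Matrix.of_apply, Matrix.mul_apply]
      rw [hsgC j]
      simp only [map_sum, map_smul, smul_eq_mul]
      exact Finset.sum_congr rfl fun k _ => by rw [hsg' k]; ring
    show (Matrix.of fun i j => ω (e i : V) ((sg j : V))).det = _
    rw [hmat, Matrix.det_mul]
  have hFsg : detA ω f sg = b * C.det := by
    have hmat : (Matrix.of fun i j => ω (f i : V) ((sg j : V)))
        = (Matrix.of fun i k => ω (f i : V) (S ((g k : V)))) * C := by
      ext i j
      simp only [Matrix.of_apply, Matrix.mul_apply]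
      rw [hsgC j]
      simp only [map_sum, map_smul, smul_eq_mul]
      exact Finset.sum_congr rfl fun k _ => by rw [hsg' k]; ring
    show (Matrix.of fun i j => ω (f i : V) ((sg j : V))).det = _
    rw [hmat, Matrix.det_mul]
  -- det P * det Q = 1
  have hPQ : P.det * Q.det = 1 := by
    have h1 : detA ω e f = P.det * (Matrix.of fun i j => ω (e i : V) (S ((f j : V)))).det :=
      keyE (fun j => (f j : V))
    have h2 : (Matrix.of fun i j => ω (e i : V) (S ((f j : V))))
        = (Matrix.of fun i l => ω (e i : V) ((f l : V))) * Q := by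
      ext i j
      simp only [Matrix.of_apply, Matrix.mul_apply]
      rw [hSf j]
      simp only [map_sum, map_smul, smul_eq_mul]
      exact Finset.sum_congr rfl fun k _ => by ring
    rw [h2, Matrix.det_mul] at h1
    have h2' : (Matrix.of fun i l => ω (e i : V) ((f l : V))).det = detA ω e f := rfl
    rw [h2'] at h1
    have h3 : P.det * Q.det * detA ω e f = 1 * detA ω e f := by
      rw [one_mul]; linear_combination -h1
    exact mul_right_cancel₀ hAef h3
  -- derive nonvanishing of the pieces
  have ha0 : a ≠ 0 := fun h => hAesg (by rw [hEsg, h, zero_mul])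
  have hQ0 : Q.det ≠ 0 := fun h => hAfg (by rw [hFg, h, zero_mul])
  have hb0 : b ≠ 0 := fun h => hAfg (by rw [hFg, h, mul_zero])
  have hP0 : P.det ≠ 0 := fun h => by rw [h, zero_mul] at hPQ; exact zero_ne_one hPQ
  have hQinv : Q.det = P.det⁻¹ := by
    field_simp
    linear_combination hPQ
  -- conclude
  constructor
  · rw [crossRatioB, hEg, hFg, hEsg, hFsg, ← hdetP, ← hdetQ]
    field_simp
  · rw [crossRatioB, hEg, hFg, hEsg, hFsg, ← hdetP, hQinv]
    field_simp
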